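/- Let L, U, B̄ be 2×2 real symmetric matrices such that U − B̄, B̄ − L, and U − L are positive definite; let G₊ be a 2×2 real symmetric positive semidefinite matrix, G₋ a 2×2 real symmetric negative semidefinite matrix, and τ ≥ 0 a real number. Define for symmetric X the function φ(X) = tr(((U − B̄)G₊(U − B̄) + τ(X − B̄)²)·(U − X)⁻¹) + tr(((L − B̄)G₋(L − B̄) − τ(X − B̄)²)·(L − X)⁻¹). Then φ is convex on the convex set S = {X : X is a 2×2 real symmetric matrix, U − X is positive definite, and X − L is positive definite}. -/

import Mathlib

open Matrix

variable {n : Type*} [Fintype n] [DecidableEq n]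

lemma psd_smul {A : Matrix n n ℝ} (hA : A.PosSemidef) {a : ℝ} (ha : 0 ≤ a) :
    (a • A).PosSemidef := by
  refine ⟨?_, fun x => ?_⟩
  · unfold Matrix.IsHermitian
    rw [conjTranspose_smul, hA.1, star_trivial]
  · exact (hA.smul ha).2 x

lemma pd_smul {A : Matrix n n ℝ} (hA : A.PosDef) {a : ℝ} (ha : 0 < a) :
    (a • A).PosDef := by
  refine ⟨?_, fun x hx => ?_⟩
  · unfold Matrix.IsHermitian
    rw [conjTranspose_smul, hA.1, star_trivial]
  · exact (hA.smul ha).2 hx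

lemma psd_trace_nonneg {A : Matrix n n ℝ} (hA : A.PosSemidef) : 0 ≤ A.trace := by
  rw [Matrix.trace]
  refine Finset.sum_nonneg fun i _ => ?_
  have := hA.dotProduct_mulVec_nonneg (Pi.single i 1)
  simpa [Matrix.mulVec, dotProduct, Pi.single_apply] using this

lemma frac_key (M N V W : Matrix n n ℝ) (hM : M.PosDef) (hN : N.PosDef)
    {a b : ℝ} (ha : 0 < a) (hb : 0 < b) :
    ((a • (Vᴴ * M⁻¹ * V) + b • (Wᴴ * N⁻¹ * W)) -
      (a • V + b • W)ᴴ * (a • M + b • N)⁻¹ * (a • V + b • W)).PosSemidef := by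
  have hMN : (a • M + b • N).PosDef := (pd_smul hM ha).add (pd_smul hN hb)
  haveI := hM.isUnit.invertible
  haveI := hN.isUnit.invertible
  haveI := hMN.isUnit.invertible
  have h1 : (fromBlocks M V Vᴴ (Vᴴ * M⁻¹ * V)).PosSemidef := by
    rw [PosDef.fromBlocks₁₁ _ _ hM, sub_self]
    exact Matrix.PosSemidef.zero
  have h2 : (fromBlocks N W Wᴴ (Wᴴ * N⁻¹ * W)).PosSemidef := by
    rw [PosDef.fromBlocks₁₁ _ _ hN, sub_self]
    exact Matrix.PosSemidef.zero
  have h3 := (psd_smul h1 ha.le).add (psd_smul h2 hb.le)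
  have h4 : a • fromBlocks M V Vᴴ (Vᴴ * M⁻¹ * V) + b • fromBlocks N W Wᴴ (Wᴴ * N⁻¹ * W)
      = fromBlocks (a • M + b • N) (a • V + b • W) (a • V + b • W)ᴴ
          (a • (Vᴴ * M⁻¹ * V) + b • (Wᴴ * N⁻¹ * W)) := by
    rw [fromBlocks_smul, fromBlocks_smul, fromBlocks_add, conjTranspose_add,
      conjTranspose_smul, conjTranspose_smul, star_trivial, star_trivial]
  rw [h4] at h3
  exact (PosDef.fromBlocks₁₁ _ _ hMN).mp h3

lemma term_ineq (C M N V W : Matrix n n ℝ) (hC : C.PosSemidef)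
    (hM : M.PosDef) (hN : N.PosDef) (hV : Vᴴ = V) (hW : Wᴴ = W)
    {τ a b : ℝ} (hτ : 0 ≤ τ) (ha : 0 < a) (hb : 0 < b) (hab : a + b = 1) :
    ((C + τ • (a • V + b • W) ^ 2) * (a • M + b • N)⁻¹).trace
      ≤ a * ((C + τ • V ^ 2) * M⁻¹).trace + b * ((C + τ • W ^ 2) * N⁻¹).trace := by
  open scoped MatrixOrder in
  obtain ⟨R, hR, hRR⟩ : ∃ R : Matrix n n ℝ, Rᴴ = R ∧ R * R = C :=
    ⟨CFC.sqrt C, (CFC.sqrt_nonneg C).posSemidef.1, CFC.sqrt_mul_sqrt_self C hC.nonneg⟩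
  have hZ : (a • V + b • W)ᴴ = a • V + b • W := by
    rw [conjTranspose_add, conjTranspose_smul, conjTranspose_smul, hV, hW,
      star_trivial, star_trivial]
  have hRab : a • R + b • R = R := by rw [← add_smul, hab, one_smul]
  have tr_sq : ∀ (S K : Matrix n n ℝ), Sᴴ = S → ((S ^ 2) * K).trace = (Sᴴ * K * S).trace := by
    intro S K hS
    rw [hS, pow_two, mul_assoc, trace_mul_comm, mul_assoc]
  have tr_C : ∀ (K : Matrix n n ℝ), (C * K).trace = (Rᴴ * K * R).trace := by
    intro K
    rw [hR, ← hRR, mul_assoc, trace_mul_comm, mul_assoc]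
  have hP1 := frac_key M N R R hM hN ha hb
  rw [hRab] at hP1
  have hP2 := frac_key M N V W hM hN ha hb
  have hD := (hP1.add (psd_smul hP2 hτ))
  have htr := psd_trace_nonneg hD
  rw [trace_add, trace_smul, trace_sub, trace_sub, trace_add, trace_add,
    trace_smul, trace_smul, trace_smul, trace_smul] at htr
  have eL : ((C + τ • (a • V + b • W) ^ 2) * (a • M + b • N)⁻¹).trace
      = (Rᴴ * (a • M + b • N)⁻¹ * R).trace
        + τ * ((a • V + b • W)ᴴ * (a • M + b • N)⁻¹ * (a • V + b • W)).trace := by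
    rw [add_mul, trace_add, smul_mul_assoc, trace_smul, tr_C, tr_sq _ _ hZ]
    simp
  have eX : ((C + τ • V ^ 2) * M⁻¹).trace
      = (Rᴴ * M⁻¹ * R).trace + τ * (Vᴴ * M⁻¹ * V).trace := by
    rw [add_mul, trace_add, smul_mul_assoc, trace_smul, tr_C, tr_sq _ _ hV]; simp
  have eY : ((C + τ • W ^ 2) * N⁻¹).trace
      = (Rᴴ * N⁻¹ * R).trace + τ * (Wᴴ * N⁻¹ * W).trace := by
    rw [add_mul, trace_add, smul_mul_assoc, trace_smul, tr_C, tr_sq _ _ hW]; simp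
  rw [eL, eX, eY]
  simp only [smul_eq_mul] at htr
  nlinarith [htr]

lemma pd_combo {P Q : Matrix n n ℝ} (hP : P.PosDef) (hQ : Q.PosDef) {a b : ℝ}
    (ha : 0 ≤ a) (hb : 0 ≤ b) (hab : a + b = 1) : (a • P + b • Q).PosDef := by
  rcases ha.eq_or_lt with h | h
  · rw [← h, zero_add] at hab
    rw [← h, hab]
    simpa using hQ
  rcases hb.eq_or_lt with h' | h'
  · rw [← h', add_zero] at hab
    rw [← h', hab]
    simpa using hP
  exact (pd_smul hP h).add (pd_smul hQ h')

lemma term2_rw (L B Gm X : Matrix n n ℝ) (τ : ℝ) (hXL : (X - L).PosDef) :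
    (((L - B) * Gm * (L - B) - τ • (X - B) ^ 2) * (L - X)⁻¹).trace
      = (((L - B) * (-Gm) * (L - B) + τ • (X - B) ^ 2) * (X - L)⁻¹).trace := by
  have hdet : IsUnit (X - L).det := (Matrix.isUnit_iff_isUnit_det _).mp hXL.isUnit
  have hinv : (L - X)⁻¹ = -((X - L)⁻¹) := by
    apply Matrix.inv_eq_right_inv
    rw [show L - X = -(X - L) from (neg_sub _ _).symm, neg_mul_neg,
      Matrix.mul_nonsing_inv _ hdet]
  rw [hinv, mul_neg, ← neg_mul]
  congr 2
  rw [neg_sub, mul_neg, neg_mul, sub_eq_neg_add]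

/-- One block of the hyperbolic approximation
`φ(X) = tr(((U−B̄)Gp(U−B̄) + τ(X−B̄)²)(U−X)⁻¹) + tr(((L−B̄)Gm(L−B̄) − τ(X−B̄)²)(L−X)⁻¹)`
is convex on `S = {X | X symmetric, U - X pos. def., X - L pos. def.}`. -/
theorem stmt2 (L U B Gp Gm : Matrix (Fin 2) (Fin 2) ℝ) (τ : ℝ)
    (hL : Lᵀ = L) (hU : Uᵀ = U) (hB : Bᵀ = B) (hGp : Gpᵀ = Gp) (hGm : Gmᵀ = Gm)
    (hUB : (U - B).PosDef) (hBL : (B - L).PosDef) (hUL : (U - L).PosDef)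
    (hGppsd : Gp.PosSemidef) (hGmnsd : (-Gm).PosSemidef) (hτ : 0 ≤ τ) :
    ConvexOn ℝ {X : Matrix (Fin 2) (Fin 2) ℝ | Xᵀ = X ∧ (U - X).PosDef ∧ (X - L).PosDef}
      (fun X => (((U - B) * Gp * (U - B) + τ • (X - B) ^ 2) * (U - X)⁻¹).trace
        + (((L - B) * Gm * (L - B) - τ • (X - B) ^ 2) * (L - X)⁻¹).trace) := by
  -- positive semidefinite "constant" matrices
  have hUBt : (U - B)ᴴ = U - B := by
    rw [conjTranspose_eq_transpose_of_trivial, transpose_sub, hU, hB]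
  have hLBt : (L - B)ᴴ = L - B := by
    rw [conjTranspose_eq_transpose_of_trivial, transpose_sub, hL, hB]
  have hCp : ((U - B) * Gp * (U - B)).PosSemidef := by
    have := hGppsd.mul_mul_conjTranspose_same (U - B)
    rwa [hUBt] at this
  have hCm : ((L - B) * (-Gm) * (L - B)).PosSemidef := by
    have := hGmnsd.mul_mul_conjTranspose_same (L - B)
    rwa [hLBt] at this
  constructor
  · -- convexity of the set
    rintro X ⟨hXs, hUX, hXL⟩ Y ⟨hYs, hUY, hYL⟩ a b ha hb hab
    refine ⟨by rw [transpose_add, transpose_smul, transpose_smul, hXs, hYs], ?_, ?_⟩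
    · have e : U - (a • X + b • Y) = a • (U - X) + b • (U - Y) := by
        rw [smul_sub, smul_sub,
          show a • U - a • X + (b • U - b • Y) = a • U + b • U - (a • X + b • Y) from by abel,
          ← add_smul, hab, one_smul]
      rw [e]; exact pd_combo hUX hUY ha hb hab
    · have e : a • X + b • Y - L = a • (X - L) + b • (Y - L) := by
        rw [smul_sub, smul_sub,
          show a • X - a • L + (b • Y - b • L) = a • X + b • Y - (a • L + b • L) from by abel,
          ← add_smul, hab, one_smul]
      rw [e]; exact pd_combo hXL hYL ha hb hab
  · -- the convexity inequality
    rintro X ⟨hXs, hUX, hXL⟩ Y ⟨hYs, hUY, hYL⟩ a b ha hb hab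
    rcases ha.eq_or_lt with h | ha'
    · rw [← h, zero_add] at hab
      simp [← h, hab]
    rcases hb.eq_or_lt with h | hb'
    · rw [← h, add_zero] at hab
      simp [← h, hab]
    simp only [smul_eq_mul]
    have hXh : (X - B)ᴴ = X - B := by
      rw [conjTranspose_eq_transpose_of_trivial, transpose_sub, hXs, hB]
    have hYh : (Y - B)ᴴ = Y - B := by
      rw [conjTranspose_eq_transpose_of_trivial, transpose_sub, hYs, hB]
    -- first term
    have eU : a • (U - X) + b • (U - Y) = U - (a • X + b • Y) := by
      rw [smul_sub, smul_sub,
        show a • U - a • X + (b • U - b • Y) = a • U + b • U - (a • X + b • Y) from by abel,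
        ← add_smul, hab, one_smul]
    have eB : a • (X - B) + b • (Y - B) = a • X + b • Y - B := by
      rw [smul_sub, smul_sub,
        show a • X - a • B + (b • Y - b • B) = a • X + b • Y - (a • B + b • B) from by abel,
        ← add_smul, hab, one_smul]
    have eL : a • (X - L) + b • (Y - L) = a • X + b • Y - L := by
      rw [smul_sub, smul_sub,
        show a • X - a • L + (b • Y - b • L) = a • X + b • Y - (a • L + b • L) from by abel,
        ← add_smul, hab, one_smul]
    have t1 := term_ineq ((U - B) * Gp * (U - B)) (U - X) (U - Y) (X - B) (Y - B)
      hCp hUX hUY hXh hYh hτ ha' hb' hab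
    rw [eU, eB] at t1
    have t2 := term_ineq ((L - B) * (-Gm) * (L - B)) (X - L) (Y - L) (X - B) (Y - B)
      hCm hXL hYL hXh hYh hτ ha' hb' hab
    rw [eL, eB] at t2
    have hZL : (a • X + b • Y - L).PosDef := by rw [← eL]; exact pd_combo hXL hYL ha hb hab
    rw [term2_rw L B Gm X τ hXL, term2_rw L B Gm Y τ hYL,
      term2_rw L B Gm (a • X + b • Y) τ hZL]
    linarith
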